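/- arXiv:1806.00664 — 5 statements merged into one kernel-verified Lean document; each statement's English description precedes it below -/
import Mathlib

section
/- Let A be an n×n symmetric 0-1 matrix belonging to the class M_n(δ, s): A_{ij} = 1 whenever |i − j| ≤ δ, and the number of nonzero entries of A equals (n + (2n−1)δ − δ²) + s, where 0 ≤ s ≤ n − δ − 1. Then the identity permutation minimizes, over all permutations π of {1,…,n}, the objective Σ_{i,j} A_{ij}·min(δ², |π(i) − π(j)|²). -/
open Finset

/-!
Out of the band `A` vanishes, and there the identity already pays the cap `δ²`, the largest
possible cost of a pair; inside the band `A` is `1`. Since every permutation has the same total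
cost over all pairs, the identity pays at most as much as `π` on the support of `A`.
-/

noncomputable def cappedSqDist (δ a b : ℕ) : ℝ :=
  min ((δ : ℝ) ^ 2) ((((a : ℤ) - (b : ℤ)).natAbs : ℝ) ^ 2)

lemma cappedSqDist_le (δ a b : ℕ) : cappedSqDist δ a b ≤ (δ : ℝ) ^ 2 :=
  min_le_left _ _

lemma cappedSqDist_of_le_natAbs {δ a b : ℕ} (h : δ ≤ ((a : ℤ) - (b : ℤ)).natAbs) :
    cappedSqDist δ a b = (δ : ℝ) ^ 2 :=
  min_eq_left (pow_le_pow_left₀ (Nat.cast_nonneg _) (Nat.cast_le.mpr h) 2)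

lemma sum_mul_le_sum_mul_of_sum_eq {ι : Type*} [Fintype ι] {w f g : ι → ℝ}
    (hw : ∀ i, w i ≤ 1) (hfg : ∀ i, w i ≠ 1 → f i ≤ g i) (hsum : ∑ i, f i = ∑ i, g i) :
    ∑ i, w i * g i ≤ ∑ i, w i * f i := by
  -- `(1 - w i) * (g i - f i) ≥ 0`, summed against `∑ f = ∑ g`
  have hterm : ∀ i, w i * g i + f i ≤ w i * f i + g i := by
    intro i
    by_cases hi : w i = 1
    · simp [hi, add_comm]
    · nlinarith [hw i, hfg i hi]
  have := Finset.sum_le_sum fun i (_ : i ∈ univ) => hterm i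
  simp only [Finset.sum_add_distrib] at this
  linarith

theorem identity_minimizes_R2SUM_general (n δ : ℕ)
    (A : Fin n → Fin n → ℝ)
    (hbin : ∀ i j, A i j = 0 ∨ A i j = 1)
    (hband : ∀ i j : Fin n, ((i : ℤ) - (j : ℤ)).natAbs ≤ δ → A i j = 1) :
    ∀ π : Equiv.Perm (Fin n),
      ∑ i, ∑ j, A i j *
          min ((δ : ℝ) ^ 2) ((((π i : ℤ) - (π j : ℤ)).natAbs : ℝ) ^ 2)
        ≥ ∑ i, ∑ j, A i j *
          min ((δ : ℝ) ^ 2) ((((i : ℤ) - (j : ℤ)).natAbs : ℝ) ^ 2) := by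
  intro π
  have hw : ∀ p : Fin n × Fin n, A p.1 p.2 ≤ 1 := fun p => by
    rcases hbin p.1 p.2 with h | h <;> simp [h]
  have hoff : ∀ p : Fin n × Fin n, A p.1 p.2 ≠ 1 →
      cappedSqDist δ (π p.1) (π p.2) ≤ cappedSqDist δ p.1 p.2 := fun p hp => by
    rw [cappedSqDist_of_le_natAbs (not_le.mp (mt (hband p.1 p.2) hp)).le]
    exact cappedSqDist_le _ _ _
  have htotal : ∑ p : Fin n × Fin n, cappedSqDist δ (π p.1) (π p.2)
      = ∑ p : Fin n × Fin n, cappedSqDist δ p.1 p.2 :=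
    Fintype.sum_equiv (π.prodCongr π) _ _ fun _ => rfl
  have := sum_mul_le_sum_mul_of_sum_eq hw hoff htotal
  rwa [Fintype.sum_prod_type' fun i j => A i j * cappedSqDist δ i j,
    Fintype.sum_prod_type' fun i j => A i j * cappedSqDist δ (π i) (π j)] at this

/-- Proposition 2.3, first half: if `A ∈ M_n(δ, s)` (symmetric binary, all
entries within distance `δ` of the diagonal equal `1`, with exactly
`(n + (2n−1)δ − δ²) + s` nonzero entries, `s ≤ n − δ − 1`), then the
identity permutation minimizes the R2SUM objective with `λ = δ²`. -/
theorem identity_minimizes_R2SUM (n δ s : ℕ) (hδn : δ ≤ n)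
    (hs : s ≤ n - δ - 1)
    (A : Fin n → Fin n → ℝ)
    (hsym : ∀ i j, A i j = A j i)
    (hbin : ∀ i j, A i j = 0 ∨ A i j = 1)
    (hband : ∀ i j : Fin n, ((i : ℤ) - (j : ℤ)).natAbs ≤ δ → A i j = 1)
    (hnnz : ((univ : Finset (Fin n × Fin n)).filter
        (fun p => A p.1 p.2 ≠ 0)).card = (n + (2 * n - 1) * δ - δ ^ 2) + s) :
    ∀ π : Equiv.Perm (Fin n),
      ∑ i, ∑ j, A i j *
          min ((δ : ℝ) ^ 2) ((((π i : ℤ) - (π j : ℤ)).natAbs : ℝ) ^ 2)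
        ≥ ∑ i, ∑ j, A i j *
          min ((δ : ℝ) ^ 2) ((((i : ℤ) - (j : ℤ)).natAbs : ℝ) ^ 2) :=
  identity_minimizes_R2SUM_general n δ A hbin hband
end

section
/- Given a binary symmetric matrix S ∈ {0,1}^{n×n}, there exists a binary matrix R ∈ {0,1}^{n×n} that is a strong-R matrix and minimizes the ℓ1 distance Σ_{i,j} |R_{ij} − S_{ij}| over all (real-valued) strong-R matrices with entries in [0,1]. -/
/-!
For a binary `S` and `x ∈ [0,1]` one has `|x - s| = (1 - 2s) x + s`, so on `[0,1]`-valued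
matrices the ℓ1 distance to `S` is a linear functional `L` plus a constant. A strong-R matrix
depends only on `|i - j|` through an antitone profile `f`, hence is the combination
`∑ₜ (f t - f (t+1)) • Bₜ₊₁` of the binary band matrices `Bₜ = [|i - j| < t]` with nonnegative
weights of total mass `f 0 ≤ 1`. Since `B₀ = 0`, the band matrix minimising `L` has `L ≤ 0`, and
it therefore beats every such combination.
-/

open Finset

def diagDist {n : ℕ} (i j : Fin n) : ℕ := ((i : ℤ) - (j : ℤ)).natAbs

def IsStrongR {n : ℕ} (R : Fin n → Fin n → ℝ) : Prop :=
  ∀ i j k l : Fin n, diagDist k l ≤ diagDist i j → R i j ≤ R k l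

noncomputable def bandMatrix (n t : ℕ) : Fin n → Fin n → ℝ :=
  fun i j => if diagDist i j < t then 1 else 0

/-- The ℓ1 distance to a binary matrix `S`, up to the constant `∑ S`, on `[0,1]`-valued
matrices. -/
def linearCost {ι κ : Type*} [Fintype ι] [Fintype κ] (S R : ι → κ → ℝ) : ℝ :=
  ∑ i, ∑ j, (1 - 2 * S i j) * R i j

lemma diagDist_comm {n : ℕ} (i j : Fin n) : diagDist i j = diagDist j i := by
  unfold diagDist; omega

lemma diagDist_lt {n : ℕ} (i j : Fin n) : diagDist i j < n := by
  have := i.isLt; have := j.isLt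
  unfold diagDist; omega

lemma abs_sub_eq_of_binary {x s : ℝ} (hs : s = 0 ∨ s = 1) (hx₀ : 0 ≤ x) (hx₁ : x ≤ 1) :
    |x - s| = (1 - 2 * s) * x + s := by
  rcases hs with rfl | rfl
  · rw [abs_of_nonneg (by linarith)]; ring
  · rw [abs_of_nonpos (by linarith)]; ring

lemma sum_abs_sub_eq_linearCost {ι κ : Type*} [Fintype ι] [Fintype κ] {S R : ι → κ → ℝ}
    (hS : ∀ i j, S i j = 0 ∨ S i j = 1) (hR : ∀ i j, 0 ≤ R i j ∧ R i j ≤ 1) :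
    ∑ i, ∑ j, |R i j - S i j| = linearCost S R + ∑ i, ∑ j, S i j := by
  simp only [linearCost, ← sum_add_distrib]
  exact sum_congr rfl fun i _ => sum_congr rfl fun j _ =>
    abs_sub_eq_of_binary (hS i j) (hR i j).1 (hR i j).2

lemma linearCost_sum_mul {ι κ α : Type*} [Fintype ι] [Fintype κ] (S : ι → κ → ℝ)
    (s : Finset α) (c : α → ℝ) (B : α → ι → κ → ℝ) :
    linearCost S (fun i j => ∑ t ∈ s, c t * B t i j) = ∑ t ∈ s, c t * linearCost S (B t) := by
  simp only [linearCost, mul_sum]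
  rw [sum_comm (s := s)]
  refine sum_congr rfl fun i _ => ?_
  rw [sum_comm (s := s)]
  exact sum_congr rfl fun t _ => sum_congr rfl fun j _ => by ring

lemma le_sum_mul_of_forall_le {α : Type*} {s : Finset α} {μ a : α → ℝ} {c : ℝ}
    (hμ : ∀ t ∈ s, 0 ≤ μ t) (hμs : ∑ t ∈ s, μ t ≤ 1) (hc : c ≤ 0) (ha : ∀ t ∈ s, c ≤ a t) :
    c ≤ ∑ t ∈ s, μ t * a t :=
  calc c ≤ (∑ t ∈ s, μ t) * c := by nlinarith
    _ = ∑ t ∈ s, μ t * c := sum_mul ..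
    _ ≤ ∑ t ∈ s, μ t * a t :=
      sum_le_sum fun t ht => mul_le_mul_of_nonneg_left (ha t ht) (hμ t ht)

/-- Layer-cake formula. -/
lemma sum_range_sub_mul_ite_lt (g : ℕ → ℝ) {d m : ℕ} (hdm : d ≤ m) :
    ∑ t ∈ range m, (g t - g (t + 1)) * (if d < t + 1 then 1 else 0) = g d - g m := by
  simp only [mul_ite, mul_one, mul_zero]
  rw [← sum_filter, show (range m).filter (fun t => d < t + 1) = Ico d m by
    ext; simp only [Order.lt_add_one_iff, mem_filter, mem_range, mem_Ico]; omega]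
  have := sum_Ico_sub (fun t => -g t) hdm
  simp only [sub_neg_eq_add, neg_add_eq_sub] at this
  exact this

section bandMatrix

variable {n : ℕ}

lemma bandMatrix_binary (t : ℕ) (i j : Fin n) :
    bandMatrix n t i j = 0 ∨ bandMatrix n t i j = 1 := by
  unfold bandMatrix; split_ifs <;> simp

lemma bandMatrix_mem_Icc (t : ℕ) (i j : Fin n) :
    0 ≤ bandMatrix n t i j ∧ bandMatrix n t i j ≤ 1 := by
  rcases bandMatrix_binary t i j with h | h <;> rw [h] <;> norm_num

lemma bandMatrix_symm (t : ℕ) (i j : Fin n) : bandMatrix n t i j = bandMatrix n t j i := by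
  rw [bandMatrix, bandMatrix, diagDist_comm]

lemma isStrongR_bandMatrix (t : ℕ) : IsStrongR (bandMatrix n t) := by
  intro i j k l h
  unfold bandMatrix
  split_ifs <;> first | omega | norm_num

lemma linearCost_bandMatrix_zero (S : Fin n → Fin n → ℝ) :
    linearCost S (bandMatrix n 0) = 0 := by
  simp [linearCost, bandMatrix]

end bandMatrix

section profile

variable {n : ℕ} {R : Fin n → Fin n → ℝ}

noncomputable def profile (R : Fin n → Fin n → ℝ) (d : ℕ) : ℝ :=
  if h : d < n then R ⟨0, by omega⟩ ⟨d, h⟩ else 0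

lemma IsStrongR.eq_profile (hR : IsStrongR R) (i j : Fin n) :
    R i j = profile R (diagDist i j) := by
  have hd := diagDist_lt i j
  have hdist : diagDist (⟨0, by omega⟩ : Fin n) ⟨diagDist i j, hd⟩ = diagDist i j := by
    simp [diagDist, Int.natAbs_abs]
  rw [profile, dif_pos hd]
  exact le_antisymm (hR _ _ _ _ hdist.le) (hR _ _ _ _ hdist.ge)

lemma profile_nonneg (hR₀ : ∀ i j, 0 ≤ R i j ∧ R i j ≤ 1) (d : ℕ) : 0 ≤ profile R d := by
  unfold profile; split_ifs
  exacts [(hR₀ _ _).1, le_rfl]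

lemma profile_zero_le_one (hR₀ : ∀ i j, 0 ≤ R i j ∧ R i j ≤ 1) : profile R 0 ≤ 1 := by
  unfold profile; split_ifs
  exacts [(hR₀ _ _).2, zero_le_one]

lemma IsStrongR.profile_succ_le (hR : IsStrongR R)
    (hR₀ : ∀ i j, 0 ≤ R i j ∧ R i j ≤ 1) (d : ℕ) : profile R (d + 1) ≤ profile R d := by
  by_cases hd : d + 1 < n
  · rw [profile, profile, dif_pos hd, dif_pos (by omega)]
    exact hR _ _ _ _ (by simp only [diagDist]; omega)
  · rw [profile, dif_neg hd]
    exact profile_nonneg hR₀ d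

end profile

lemma IsStrongR.eq_sum_bandMatrix {n : ℕ} {R : Fin n → Fin n → ℝ} (hR : IsStrongR R) :
    R = fun i j =>
      ∑ t ∈ range n, (profile R t - profile R (t + 1)) * bandMatrix n (t + 1) i j := by
  ext i j
  have hn : profile R n = 0 := by simp [profile]
  simp only [bandMatrix]
  rw [sum_range_sub_mul_ite_lt _ (diagDist_lt i j).le, hn, sub_zero, hR.eq_profile]

/-- Every `[0,1]`-valued strong-R matrix is a sub-convex combination of band matrices. -/
lemma IsStrongR.le_linearCost {n : ℕ} {R : Fin n → Fin n → ℝ} (hR : IsStrongR R)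
    (hR₀ : ∀ i j, 0 ≤ R i j ∧ R i j ≤ 1) (S : Fin n → Fin n → ℝ) {c : ℝ} (hc : c ≤ 0)
    (hband : ∀ t ∈ range n, c ≤ linearCost S (bandMatrix n (t + 1))) :
    c ≤ linearCost S R := by
  rw [hR.eq_sum_bandMatrix, linearCost_sum_mul]
  refine le_sum_mul_of_forall_le (fun t _ => ?_) ?_ hc hband
  · linarith [hR.profile_succ_le hR₀ t]
  · have hn : profile R n = 0 := by simp [profile]
    rw [sum_range_sub', hn, sub_zero]
    exact profile_zero_le_one hR₀

theorem binary_strongR_l1_projection_general (n : ℕ) (S : Fin n → Fin n → ℝ)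
    (hbin : ∀ i j, S i j = 0 ∨ S i j = 1) :
    ∃ R : Fin n → Fin n → ℝ,
      (∀ i j, R i j = 0 ∨ R i j = 1) ∧
      (∀ i j, R i j = R j i) ∧
      (∀ i j k l : Fin n,
        ((k : ℤ) - (l : ℤ)).natAbs ≤ ((i : ℤ) - (j : ℤ)).natAbs →
        R i j ≤ R k l) ∧
      (∀ R' : Fin n → Fin n → ℝ,
        (∀ i j, 0 ≤ R' i j ∧ R' i j ≤ 1) →
        (∀ i j, R' i j = R' j i) →
        (∀ i j k l : Fin n,
          ((k : ℤ) - (l : ℤ)).natAbs ≤ ((i : ℤ) - (j : ℤ)).natAbs →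
          R' i j ≤ R' k l) →
        ∑ i, ∑ j, |R i j - S i j| ≤ ∑ i, ∑ j, |R' i j - S i j|) := by
  obtain ⟨t₀, -, ht₀⟩ := exists_min_image (range (n + 1))
    (fun t => linearCost S (bandMatrix n t)) ⟨0, by simp⟩
  refine ⟨bandMatrix n t₀, bandMatrix_binary t₀, bandMatrix_symm t₀, isStrongR_bandMatrix t₀,
    fun R' hR'₀ _ hR' => ?_⟩
  rw [sum_abs_sub_eq_linearCost hbin (bandMatrix_mem_Icc t₀),
    sum_abs_sub_eq_linearCost hbin hR'₀]
  gcongr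
  refine IsStrongR.le_linearCost hR' hR'₀ S ?_ fun t ht => ht₀ (t + 1) (by simpa using ht)
  simpa [linearCost_bandMatrix_zero] using ht₀ 0 (by simp)

/-- ℓ1 projection of a symmetric binary matrix onto the set of strong-R
matrices with entries in `[0,1]` can be taken binary: there exists a binary
strong-R matrix `R` minimizing `Σ_{i,j} |R_{ij} − S_{ij}|` over all
real-valued strong-R matrices with entries in `[0,1]`. -/
theorem binary_strongR_l1_projection (n : ℕ) (S : Fin n → Fin n → ℝ)
    (hsym : ∀ i j, S i j = S j i)
    (hbin : ∀ i j, S i j = 0 ∨ S i j = 1) :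
    ∃ R : Fin n → Fin n → ℝ,
      (∀ i j, R i j = 0 ∨ R i j = 1) ∧
      (∀ i j, R i j = R j i) ∧
      (∀ i j k l : Fin n,
        ((k : ℤ) - (l : ℤ)).natAbs ≤ ((i : ℤ) - (j : ℤ)).natAbs →
        R i j ≤ R k l) ∧
      (∀ R' : Fin n → Fin n → ℝ,
        (∀ i j, 0 ≤ R' i j ∧ R' i j ≤ 1) →
        (∀ i j, R' i j = R' j i) →
        (∀ i j k l : Fin n,
          ((k : ℤ) - (l : ℤ)).natAbs ≤ ((i : ℤ) - (j : ℤ)).natAbs →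
          R' i j ≤ R' k l) →
        ∑ i, ∑ j, |R i j - S i j| ≤ ∑ i, ∑ j, |R' i j - S i j|) :=
  binary_strongR_l1_projection_general n S hbin
end

section
/- Let g ∈ ℝⁿ, let i ≠ j be fixed indices, and consider minimizing Σ_k π_k g_k over permutation vectors π of (1,…,n) satisfying π_i + 1 ≤ π_j. A minimizer exists at which either the unconstrained sorted solution already satisfies the constraint, or the constraint is active: π_j = π_i + 1. -/
/-!
If the sorted solution `π₀` violates the constraint, i.e. `π₀ j < π₀ i`, exchanging `i` and `j`
in `π₀` shows `g i ≤ g j`. Now take any constrained minimizer `π` with `π j ≥ π i + 2` and let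
`m` occupy the slot right after `i`. If `g m < g i ≤ g j`, exchanging `m` and `j` keeps `π`
feasible and strictly lowers the cost, which is impossible. Hence `g i ≤ g m`, and exchanging `i`
and `m` yields a constrained minimizer whose gap `π j - π i` is one smaller; repeat until the gap
is one.
-/

open Finset Equiv

variable {R : Type*} {n : ℕ}

/-- The objective `∑ₖ πₖ gₖ` on permutation vectors `πₖ = τ k + 1` of `(1, …, n)`. -/
def permCost [CommRing R] (g : Fin n → R) (τ : Perm (Fin n)) : R :=
  ∑ k, ((τ k : R) + 1) * g k

theorem permCost_mul_swap [CommRing R] (g : Fin n → R) (π : Perm (Fin n)) {p q : Fin n}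
    (hpq : p ≠ q) :
    permCost g (π * swap p q) = permCost g π + ((π q : R) - π p) * (g p - g q) := by
  rw [permCost, permCost, ← sub_eq_iff_eq_add', ← sum_sub_distrib,
    Fintype.sum_eq_add p q hpq fun k hk => by simp [swap_apply_of_ne_of_ne hk.1 hk.2]]
  simp only [Perm.mul_apply, swap_apply_left, swap_apply_right]
  ring

theorem exists_lt_isMinOn_permCost [CommRing R] [LinearOrder R] (g : Fin n → R) {i j : Fin n}
    (hij : i ≠ j) : ∃ π : Perm (Fin n), π i < π j ∧ IsMinOn (permCost g) {τ | τ i < τ j} π := by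
  have hne : {τ : Perm (Fin n) | τ i < τ j}.Nonempty := by
    rcases hij.lt_or_gt with h | h
    · exact ⟨1, h⟩
    · exact ⟨swap i j, by simpa using h⟩
  obtain ⟨π, hπ, hmin⟩ := Set.exists_min_image _ (permCost g) (Set.toFinite _) hne
  exact ⟨π, hπ, isMinOn_iff.2 hmin⟩

section Ordered

variable [CommRing R] [LinearOrder R] [IsStrictOrderedRing R] {g : Fin n → R}
  {π : Perm (Fin n)} {p q i j : Fin n}

theorem permCost_mul_swap_le (hπ : π p ≤ π q) (hg : g p ≤ g q) :
    permCost g (π * swap p q) ≤ permCost g π := by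
  obtain rfl | hpq := eq_or_ne p q
  · rw [swap_self, ← Perm.one_def, mul_one]
  rw [permCost_mul_swap g π hpq, add_le_iff_nonpos_right]
  exact mul_nonpos_of_nonneg_of_nonpos (sub_nonneg.2 (by exact_mod_cast hπ)) (sub_nonpos.2 hg)

theorem permCost_mul_swap_lt (hπ : π p < π q) (hg : g p < g q) :
    permCost g (π * swap p q) < permCost g π := by
  rw [permCost_mul_swap g π (π.injective.ne_iff.1 hπ.ne), add_lt_iff_neg_left]
  exact mul_neg_of_pos_of_neg (sub_pos.2 (by exact_mod_cast hπ)) (sub_neg.2 hg)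

theorem exists_isMinOn_permCost_apply_left_succ (hg : g i ≤ g j)
    (hπ : IsMinOn (permCost g) {τ | τ i < τ j} π) (hgap : (π i : ℕ) + 1 < π j) :
    ∃ π' : Perm (Fin n), IsMinOn (permCost g) {τ | τ i < τ j} π' ∧
      (π' i : ℕ) = π i + 1 ∧ π' j = π j := by
  set m := π.symm ⟨π i + 1, hgap.trans (π j).isLt⟩
  have hπm : (π m : ℕ) = π i + 1 := by simp [m]
  have hmi : m ≠ i := fun h => by rw [h] at hπm; omega
  have hmj : m ≠ j := fun h => by rw [h] at hπm; omega
  have hij : i ≠ j := fun h => by rw [h] at hgap; omega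
  rcases le_or_gt (g i) (g m) with hgm | hgm
  · have hle : permCost g (π * swap i m) ≤ permCost g π :=
      permCost_mul_swap_le (Fin.le_def.2 (by omega)) hgm
    refine ⟨π * swap i m, isMinOn_iff.2 fun τ hτ => hle.trans (isMinOn_iff.1 hπ τ hτ), ?_, ?_⟩
    · simp [hπm]
    · simp [swap_apply_of_ne_of_ne hij.symm hmj.symm]
  · have hfeas : (π * swap m j) i < (π * swap m j) j := by
      simp only [Perm.mul_apply, swap_apply_of_ne_of_ne hmi.symm hij,
        swap_apply_right, Fin.lt_def]
      omega
    exact absurd (isMinOn_iff.1 hπ _ hfeas)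
      (permCost_mul_swap_lt (Fin.lt_def.2 (by omega)) (hgm.trans_le hg)).not_ge

theorem exists_isMinOn_permCost_apply_eq_succ (hg : g i ≤ g j)
    (hπ : IsMinOn (permCost g) {τ | τ i < τ j} π) (hlt : π i < π j) :
    ∃ π' : Perm (Fin n), IsMinOn (permCost g) {τ | τ i < τ j} π' ∧ (π' j : ℕ) = π' i + 1 := by
  obtain ⟨d, hd⟩ := Nat.exists_eq_add_of_lt (Fin.lt_def.1 hlt)
  clear hlt
  induction d generalizing π with
  | zero => exact ⟨π, hπ, hd⟩
  | succ d ih =>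
    obtain ⟨π', hπ', hi, hj⟩ := exists_isMinOn_permCost_apply_left_succ hg hπ (by omega)
    exact ih hπ' (by omega)

end Ordered

/-- Structure of the tie-break-constrained LMO (Lim–Wright): given `g ∈ ℝⁿ`,
fixed indices `i ≠ j`, and an unconstrained minimizer `π₀` of
`Σ_k π_k g_k` over permutation vectors of `(1,…,n)`, there exists a
minimizer `π` of the problem constrained by `π_i + 1 ≤ π_j` which either
equals `π₀` (when `π₀` is feasible) or saturates the constraint
(`π_j = π_i + 1`). -/
theorem lmo_tiebreak_structure (n : ℕ) (g : Fin n → ℝ) (i j : Fin n)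
    (hij : i ≠ j) (π₀ : Equiv.Perm (Fin n))
    (hopt : ∀ τ : Equiv.Perm (Fin n),
      ∑ k, ((π₀ k : ℝ) + 1) * g k ≤ ∑ k, ((τ k : ℝ) + 1) * g k) :
    ∃ π : Equiv.Perm (Fin n),
      ((π i : ℕ) + 1 ≤ (π j : ℕ)) ∧
      (∀ τ : Equiv.Perm (Fin n), (τ i : ℕ) + 1 ≤ (τ j : ℕ) →
        ∑ k, ((π k : ℝ) + 1) * g k ≤ ∑ k, ((τ k : ℝ) + 1) * g k) ∧
      (π = π₀ ∨ (π j : ℕ) = (π i : ℕ) + 1) := by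
  by_cases hfeas : π₀ i < π₀ j
  · exact ⟨π₀, hfeas, fun τ _ => hopt τ, Or.inl rfl⟩
  have hji : π₀ j < π₀ i := (not_lt.1 hfeas).lt_of_ne (π₀.injective.ne hij.symm)
  have hg : g i ≤ g j := not_lt.1 fun hg => (hopt _).not_gt (permCost_mul_swap_lt hji hg)
  obtain ⟨π₁, hπ₁, hmin₁⟩ := exists_lt_isMinOn_permCost g hij
  obtain ⟨π, hmin, hsucc⟩ := exists_isMinOn_permCost_apply_eq_succ hg hmin₁ hπ₁
  exact ⟨π, hsucc.ge, fun τ hτ => isMinOn_iff.1 hmin τ hτ, Or.inr hsucc⟩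
end

section
/- Let s ∈ ℝ^p with nonnegative entries and let a ≥ 0. Consider minimizing ‖x − s‖₂ over x ∈ ℝ^p with x ≥ 0 and Σ_i x_i = a. Assume s is sorted in decreasing order. Let k be the largest index in {1,…,p} such that s_k + (a − Σ_{i=1}^k s_i)/k > 0 (taking k = p if this holds for all indices). Then the minimizer x* is given by x*_i = s_i + (a − Σ_{j=1}^k s_j)/k for i ≤ k and x*_i = 0 for i > k. -/
/-!
The candidate `x = (s + λ)⁺`, with water level `λ = (a - Σ_{i ≤ k} s_i) / k`, satisfies the KKT
conditions of the projection: `x_i = s_i + λ > 0` for `i ≤ k` (by sortedness and the choice of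
`k`), and `x_i = 0` with `s_i + λ ≤ 0` for `i > k`, because by maximality of `k` the level computed
with `k + 1` terms already makes `s_{k+1}` nonpositive, and the levels with `k` and `k + 1` terms
give `s_{k+1}` the same sign. The KKT conditions give `⟪y - x, x - s⟫ ≥ 0` for every feasible `y`,
and then `‖y - s‖² = ‖x - s‖² + 2⟪y - x, x - s⟫ + ‖y - x‖² ≥ ‖x - s‖²`.
-/

open Finset

theorem sum_sq_sub_le_of_sum_mul_nonneg {ι : Type*} (I : Finset ι) (s x y : ι → ℝ)
    (h : 0 ≤ ∑ i ∈ I, (y i - x i) * (x i - s i)) :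
    ∑ i ∈ I, (x i - s i) ^ 2 ≤ ∑ i ∈ I, (y i - s i) ^ 2 := by
  have hexpand : ∀ i ∈ I, (y i - s i) ^ 2
      = (x i - s i) ^ 2 + (2 * ((y i - x i) * (x i - s i)) + (y i - x i) ^ 2) :=
    fun i _ => by ring
  rw [sum_congr rfl hexpand, sum_add_distrib, sum_add_distrib, ← mul_sum]
  have hsq : 0 ≤ ∑ i ∈ I, (y i - x i) ^ 2 := sum_nonneg fun i _ => sq_nonneg _
  linarith

/-- Projection onto `{y ≥ 0 : Σ y = Σ x}` from KKT conditions with multiplier `lam`. -/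
theorem sum_sq_sub_le_of_kkt {ι : Type*} (I : Finset ι) (s x : ι → ℝ) (lam : ℝ)
    (hx : ∀ i ∈ I, x i = s i + lam ∨ (x i = 0 ∧ s i + lam ≤ 0))
    (y : ι → ℝ) (hy : ∀ i ∈ I, 0 ≤ y i) (hsum : ∑ i ∈ I, y i = ∑ i ∈ I, x i) :
    ∑ i ∈ I, (x i - s i) ^ 2 ≤ ∑ i ∈ I, (y i - s i) ^ 2 := by
  refine sum_sq_sub_le_of_sum_mul_nonneg I s x y ?_
  have hterm : ∀ i ∈ I, lam * (y i - x i) ≤ (y i - x i) * (x i - s i) := by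
    intro i hi
    rcases hx i hi with hxi | ⟨hxi, hneg⟩
    · rw [hxi]; linarith
    · rw [hxi]; nlinarith [hy i hi]
  calc (0 : ℝ) = lam * ∑ i ∈ I, (y i - x i) := by
        rw [sum_sub_distrib, hsum, sub_self, mul_zero]
    _ = ∑ i ∈ I, lam * (y i - x i) := mul_sum _ _ _
    _ ≤ _ := sum_le_sum hterm

/-- The shift that makes `s_1 + λ, …, s_m + λ` sum to `a`. -/
noncomputable def waterLevel (s : ℕ → ℝ) (a : ℝ) (m : ℕ) : ℝ :=
  (a - ∑ i ∈ Icc 1 m, s i) / m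

theorem sum_add_waterLevel (s : ℕ → ℝ) (a : ℝ) {m : ℕ} (hm : m ≠ 0) :
    ∑ i ∈ Icc 1 m, (s i + waterLevel s a m) = a := by
  rw [sum_add_distrib, sum_const, Nat.card_Icc, Nat.add_sub_cancel, nsmul_eq_mul, waterLevel]
  field_simp
  ring

theorem succ_mul_add_waterLevel_succ (s : ℕ → ℝ) (a : ℝ) {m : ℕ} (hm : m ≠ 0) :
    ((m : ℝ) + 1) * (s (m + 1) + waterLevel s a (m + 1)) = m * (s (m + 1) + waterLevel s a m) := by
  rw [waterLevel, waterLevel, sum_Icc_succ_top (by omega)]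
  push_cast
  field_simp
  ring

theorem add_waterLevel_nonpos_of_succ (s : ℕ → ℝ) (a : ℝ) {m : ℕ} (hm : m ≠ 0)
    (h : s (m + 1) + waterLevel s a (m + 1) ≤ 0) : s (m + 1) + waterLevel s a m ≤ 0 := by
  have hmR : (0 : ℝ) < m := by positivity
  refine nonpos_of_mul_nonpos_left (b := (m : ℝ)) ?_ hmR
  rw [mul_comm, ← succ_mul_add_waterLevel_succ s a hm]
  exact mul_nonpos_of_nonneg_of_nonpos (by positivity) h

theorem sum_Icc_ite_le {M : Type*} [AddCommMonoid M] (f : ℕ → M) {k p : ℕ} (hkp : k ≤ p) :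
    ∑ i ∈ Icc 1 p, (if i ≤ k then f i else 0) = ∑ i ∈ Icc 1 k, f i := by
  rw [← sum_filter]
  congr 1
  ext i
  simp only [mem_filter, mem_Icc]
  omega

theorem simplex_projection_waterfilling_general (p : ℕ) (s : ℕ → ℝ) (a : ℝ)
    (hsort : ∀ i ∈ Icc 1 p, ∀ j ∈ Icc 1 p, i ≤ j → s j ≤ s i)
    (k : ℕ) (hk1 : 1 ≤ k) (hkp : k ≤ p)
    (hkpos : 0 < s k + (a - ∑ i ∈ Icc 1 k, s i) / k)
    (hkmax : ∀ m, k < m → m ≤ p →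
      ¬ (0 < s m + (a - ∑ i ∈ Icc 1 m, s i) / m)) :
    ∀ x : ℕ → ℝ,
      (∀ i ∈ Icc 1 p,
        x i = if i ≤ k then s i + (a - ∑ j ∈ Icc 1 k, s j) / k else 0) →
      ((∀ i ∈ Icc 1 p, 0 ≤ x i) ∧ (∑ i ∈ Icc 1 p, x i = a) ∧
        ∀ y : ℕ → ℝ, (∀ i ∈ Icc 1 p, 0 ≤ y i) →
          (∑ i ∈ Icc 1 p, y i = a) →
          ∑ i ∈ Icc 1 p, (x i - s i) ^ 2 ≤ ∑ i ∈ Icc 1 p, (y i - s i) ^ 2) := by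
  intro x hx
  change ∀ i ∈ Icc 1 p, x i = if i ≤ k then s i + waterLevel s a k else 0 at hx
  change 0 < s k + waterLevel s a k at hkpos
  have hk0 : k ≠ 0 := by omega
  have hlow : ∀ i ∈ Icc 1 p, i ≤ k → 0 < s i + waterLevel s a k := fun i hi hik =>
    hkpos.trans_le (by linarith [hsort i hi k (mem_Icc.mpr ⟨hk1, hkp⟩) hik])
  have hhigh : ∀ i ∈ Icc 1 p, k < i → s i + waterLevel s a k ≤ 0 := by
    intro i hi hki
    have hsucc : k + 1 ∈ Icc 1 p := mem_Icc.mpr ⟨by omega, by linarith [(mem_Icc.mp hi).2]⟩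
    have hnext := add_waterLevel_nonpos_of_succ s a hk0
      (not_lt.mp (hkmax (k + 1) k.lt_succ_self (mem_Icc.mp hsucc).2))
    linarith [hsort (k + 1) hsucc i hi hki]
  have hsum : ∑ i ∈ Icc 1 p, x i = a := by
    rw [sum_congr rfl hx, sum_Icc_ite_le _ hkp, sum_add_waterLevel s a hk0]
  refine ⟨fun i hi => ?_, hsum, fun y hy hysum => ?_⟩
  · rw [hx i hi]
    split_ifs with hik
    exacts [(hlow i hi hik).le, le_rfl]
  · refine sum_sq_sub_le_of_kkt _ s x (waterLevel s a k) (fun i hi => ?_) y hy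
      (hysum.trans hsum.symm)
    rw [hx i hi]
    split_ifs with hik
    exacts [Or.inl rfl, Or.inr ⟨rfl, hhigh i hi (not_le.mp hik)⟩]

/-- Exact solution of the projection onto the scaled simplex
`{x ≥ 0 : Σ_{i=1}^p x_i = a}` of a nonnegative vector `s` sorted in
decreasing order: with `k` the largest index in `{1,…,p}` such that
`s_k + (a − Σ_{i=1}^k s_i)/k > 0`, the minimizer is
`x*_i = s_i + (a − Σ_{j=1}^k s_j)/k` for `i ≤ k` and `x*_i = 0`
for `i > k`. -/
theorem simplex_projection_waterfilling (p : ℕ) (s : ℕ → ℝ) (a : ℝ)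
    (ha : 0 ≤ a)
    (hs : ∀ i ∈ Icc 1 p, 0 ≤ s i)
    (hsort : ∀ i ∈ Icc 1 p, ∀ j ∈ Icc 1 p, i ≤ j → s j ≤ s i)
    (k : ℕ) (hk1 : 1 ≤ k) (hkp : k ≤ p)
    (hkpos : 0 < s k + (a - ∑ i ∈ Icc 1 k, s i) / k)
    (hkmax : ∀ m, k < m → m ≤ p →
      ¬ (0 < s m + (a - ∑ i ∈ Icc 1 m, s i) / m)) :
    ∀ x : ℕ → ℝ,
      (∀ i ∈ Icc 1 p,
        x i = if i ≤ k then s i + (a - ∑ j ∈ Icc 1 k, s j) / k else 0) →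
      ((∀ i ∈ Icc 1 p, 0 ≤ x i) ∧ (∑ i ∈ Icc 1 p, x i = a) ∧
        ∀ y : ℕ → ℝ, (∀ i ∈ Icc 1 p, 0 ≤ y i) →
          (∑ i ∈ Icc 1 p, y i = a) →
          ∑ i ∈ Icc 1 p, (x i - s i) ^ 2 ≤ ∑ i ∈ Icc 1 p, (y i - s i) ^ 2) :=
  simplex_projection_waterfilling_general p s a hsort k hk1 hkp hkpos hkmax
end

section
/- Let C ⊆ ℝ^p be the set {x : x ≥ 0, Σ_i x_i = a} with a ≥ 0. If s ∈ ℝ^p has nonnegative entries, then there exists a common point x* ∈ C minimizing both ‖x − s‖₂ and Σ_i |x_i − s_i| over C, namely the thresholded-shift vector from the water-filling formula (the Euclidean projection of s onto C). -/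
/-- Water-filling gives a common ℓ2- and ℓ1-minimizer: for `s ∈ ℝ^p` with
nonnegative entries and `a ≥ 0`, there is a threshold `τ` such that
`x* = max(s − τ·1, 0)` lies in `C = {x ≥ 0 : Σ x_i = a}` and minimizes
both `Σ (x_i − s_i)²` and `Σ |x_i − s_i|` over `C`. -/
theorem waterfilling_l2_l1 (p : ℕ) (hp : 0 < p) (s : Fin p → ℝ)
    (hs : ∀ i, 0 ≤ s i) (a : ℝ) (ha : 0 ≤ a) :
    ∃ τ : ℝ, ∃ x : Fin p → ℝ,
      (∀ i, x i = max (s i - τ) 0) ∧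
      (∀ i, 0 ≤ x i) ∧ (∑ i, x i = a) ∧
      (∀ y : Fin p → ℝ, (∀ i, 0 ≤ y i) → (∑ i, y i = a) →
        ∑ i, (x i - s i) ^ 2 ≤ ∑ i, (y i - s i) ^ 2) ∧
      (∀ y : Fin p → ℝ, (∀ i, 0 ≤ y i) → (∑ i, y i = a) →
        ∑ i, |x i - s i| ≤ ∑ i, |y i - s i|) := by
  haveI : Nonempty (Fin p) := ⟨⟨0, hp⟩⟩
  set f : ℝ → ℝ := fun t => ∑ i, max (s i - t) 0 with hfdef
  have hcont : Continuous f := by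
    apply continuous_finset_sum
    intro i _
    exact ((continuous_const.sub continuous_id)).max continuous_const
  set B : ℝ := Finset.univ.sup' Finset.univ_nonempty s with hB
  have hsB : ∀ i, s i ≤ B := fun i => Finset.le_sup' s (Finset.mem_univ i)
  have hB0 : 0 ≤ B := le_trans (hs ⟨0, hp⟩) (hsB ⟨0, hp⟩)
  have hfB : f B = 0 := by
    apply Finset.sum_eq_zero
    intro i _
    exact max_eq_right (by linarith [hsB i])
  have hfa : a ≤ f (-a) := by
    have h1 : f (-a) = ∑ i, (s i + a) := by
      apply Finset.sum_congr rfl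
      intro i _
      have : (0:ℝ) ≤ s i - (-a) := by linarith [hs i]
      simpa using max_eq_left this
    have h2 : ∑ i, (s i + a) = (∑ i, s i) + p * a := by
      rw [Finset.sum_add_distrib, Finset.sum_const, Finset.card_univ, Fintype.card_fin,
        nsmul_eq_mul]
    have h3 : (0:ℝ) ≤ ∑ i, s i := Finset.sum_nonneg fun i _ => hs i
    have h4 : (1:ℝ) ≤ (p:ℝ) := by exact_mod_cast hp
    nlinarith
  have hab : -a ≤ B := by linarith
  obtain ⟨τ, hτmem, hτ⟩ :=
    intermediate_value_Icc' hab hcont.continuousOn ⟨hfB ▸ ha, hfa⟩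
  set x : Fin p → ℝ := fun i => max (s i - τ) 0 with hx
  have hx0 : ∀ i, 0 ≤ x i := fun i => le_max_right _ _
  have hxsum : ∑ i, x i = a := hτ
  -- complementary slackness: c i ≥ 0 and x i * c i = 0 where c i = x i - s i + τ
  set c : Fin p → ℝ := fun i => x i - s i + τ with hc
  have hc0 : ∀ i, 0 ≤ c i := by
    intro i
    have : s i - τ ≤ x i := le_max_left _ _
    simp only [hc]; linarith
  have hxc : ∀ i, x i * c i = 0 := by
    intro i
    rcases le_or_gt (s i - τ) 0 with h | h
    · have : x i = 0 := max_eq_right h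
      simp [this]
    · have hxi : x i = s i - τ := max_eq_left h.le
      have : c i = 0 := by simp only [hc]; rw [hxi]; ring
      simp [this]
  have key : ∀ y : Fin p → ℝ, (∀ i, 0 ≤ y i) → (∑ i, y i = a) →
      0 ≤ ∑ i, (y i - x i) * (x i - s i) := by
    intro y hy hsy
    have heq : ∑ i, (y i - x i) * (x i - s i)
        = (∑ i, y i * c i) - τ * ((∑ i, y i) - ∑ i, x i) := by
      rw [mul_sub, Finset.mul_sum, Finset.mul_sum, ← Finset.sum_sub_distrib,
        ← Finset.sum_sub_distrib]
      apply Finset.sum_congr rfl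
      intro i _
      have h1 : x i * c i = 0 := hxc i
      have h2 : c i = x i - s i + τ := rfl
      rw [h2] at h1 ⊢
      linear_combination -h1
    rw [heq, hsy, hxsum, sub_self, mul_zero, sub_zero]
    exact Finset.sum_nonneg fun i _ => mul_nonneg (hy i) (hc0 i)
  refine ⟨τ, x, fun i => rfl, hx0, hxsum, ?_, ?_⟩
  · -- ℓ2 optimality
    intro y hy hsy
    have hexp : ∑ i, (y i - s i) ^ 2
        = ∑ i, (x i - s i) ^ 2 + ∑ i, (y i - x i) ^ 2
          + 2 * ∑ i, (y i - x i) * (x i - s i) := by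
      rw [Finset.mul_sum, ← Finset.sum_add_distrib, ← Finset.sum_add_distrib]
      apply Finset.sum_congr rfl
      intro i _
      ring
    have h1 : 0 ≤ ∑ i, (y i - x i) ^ 2 := Finset.sum_nonneg fun i _ => sq_nonneg _
    have h2 := key y hy hsy
    linarith [hexp]
  · -- ℓ1 optimality
    intro y hy hsy
    rcases le_or_gt 0 τ with hτ0 | hτ0
    · -- τ ≥ 0 : x i ≤ s i, so Σ|x - s| = Σ s - a
      have hxle : ∀ i, x i ≤ s i := by
        intro i
        rcases le_or_gt (s i - τ) 0 with h | h
        · have : x i = 0 := max_eq_right h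
          rw [this]; exact hs i
        · have : x i = s i - τ := max_eq_left h.le
          rw [this]; linarith
      have hxval : ∑ i, |x i - s i| = (∑ i, s i) - a := by
        rw [← hxsum, ← Finset.sum_sub_distrib]
        apply Finset.sum_congr rfl
        intro i _
        rw [abs_of_nonpos (by linarith [hxle i])]
        ring
      have hylow : (∑ i, s i) - a ≤ ∑ i, |y i - s i| := by
        rw [← hsy, ← Finset.sum_sub_distrib]
        apply Finset.sum_le_sum
        intro i _
        rw [show s i - y i = -(y i - s i) by ring]
        exact neg_le_abs _
      linarith [hxval, hylow]
    · -- τ < 0 : x i = s i - τ for all i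
      have hxeq : ∀ i, x i = s i - τ := by
        intro i
        exact max_eq_left (by linarith [hs i])
      have hxval : ∑ i, |x i - s i| = a - ∑ i, s i := by
        have h1 : ∑ i, |x i - s i| = ∑ i, (x i - s i) := by
          apply Finset.sum_congr rfl
          intro i _
          rw [abs_of_nonneg (by rw [hxeq i]; linarith)]
        rw [h1, Finset.sum_sub_distrib, hxsum]
      have hylow : a - ∑ i, s i ≤ ∑ i, |y i - s i| := by
        rw [← hsy, ← Finset.sum_sub_distrib]
        exact Finset.sum_le_sum fun i _ => le_abs_self _
      linarith [hxval, hylow]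
end
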